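/- Let (L,[·,·]) be a Lie algebra over a field F of characteristic 0 with representation ρ: L → End(V), and let φ: L×L → V be a Lie algebra 2-cocycle. Define ω(x,y,z) := φ([x,y],z) − ρ(z)φ(x,y). Then ω is a 3-cocycle of the associated Lie triple system (L, [·,·,·] = [[·,·],·]; θ_ρ): ω(x,x,y) = 0, ω(x,y,z) + ω(y,z,x) + ω(z,x,y) = 0, and for all x₁,x₂,y₁,y₂,y₃ ∈ L, ω(x₁,x₂,[y₁,y₂,y₃]) + D_ρ(x₁,x₂)ω(y₁,y₂,y₃) = ω([x₁,x₂,y₁],y₂,y₃) + ω(y₁,[x₁,x₂,y₂],y₃) + ω(y₁,y₂,[x₁,x₂,y₃]) + θ_ρ(y₂,y₃)ω(x₁,x₂,y₁) − θ_ρ(y₁,y₃)ω(x₁,x₂,y₂) + D_ρ(y₁,y₂)ω(x₁,x₂,y₃). -/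

import Mathlib

variable {F L V : Type*} [Field F] [CharZero F] [LieRing L] [LieAlgebra F L]
  [AddCommGroup V] [Module F V]

/-- `θ_ρ(x,y) := ρ(y)ρ(x)`, the representation of the associated Lie triple system. -/
def thetaRho (ρ : L →ₗ[F] Module.End F V) (x y : L) : Module.End F V := ρ y * ρ x

/-- `D_ρ(x,y) := θ_ρ(y,x) − θ_ρ(x,y)`. -/
def DRho (ρ : L →ₗ[F] Module.End F V) (x y : L) : Module.End F V :=
  thetaRho ρ y x - thetaRho ρ x y

/-- `ω(x,y,z) := φ([x,y],z) − ρ(z)φ(x,y)`. -/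
def omegaOf (ρ : L →ₗ[F] Module.End F V) (φ : L →ₗ[F] L →ₗ[F] V) (x y z : L) : V :=
  φ ⁅x, y⁆ z - ρ z (φ x y)

/-! Put `X = [x₁,x₂]`. Then `D_ρ(x₁,x₂) = ρ(X)` and `ω(x₁,x₂,c) = φ(X,c) − ρ(c)w` with
`w = φ(x₁,x₂)`, so the third identity splits into two. The terms in `w` cancel by the operator
identity `ρ([[y₁,y₂],y₃]) = θ(y₂,y₃)ρ(y₁) − θ(y₁,y₃)ρ(y₂) + D(y₁,y₂)ρ(y₃)`. The remaining
identity holds for every `X ∈ L`: it is the cocycle condition at `(X, [y₁,y₂], y₃)` minus `ρ(y₃)`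
applied to the cocycle condition at `(X, y₁, y₂)`. -/

section

variable {K A W : Type*} [Field K] [LieRing A] [LieAlgebra K A] [AddCommGroup W] [Module K W]
  {ρ : A →ₗ[K] Module.End K W} {φ : A →ₗ[K] A →ₗ[K] W}

theorem DRho_eq_of_lie (hρ : ∀ x y, ρ ⁅x, y⁆ = ρ x * ρ y - ρ y * ρ x) (x y : A) :
    DRho ρ x y = ρ ⁅x, y⁆ := by
  rw [DRho, thetaRho, thetaRho, hρ]

theorem rho_lie_lie_eq (hρ : ∀ x y, ρ ⁅x, y⁆ = ρ x * ρ y - ρ y * ρ x) (y₁ y₂ y₃ : A) :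
    ρ ⁅⁅y₁, y₂⁆, y₃⁆ = thetaRho ρ y₂ y₃ * ρ y₁ - thetaRho ρ y₁ y₃ * ρ y₂
      + DRho ρ y₁ y₂ * ρ y₃ := by
  simp only [DRho, thetaRho, hρ]
  noncomm_ring

theorem omegaOf_self_left (halt : φ.IsAlt) (x y : A) : omegaOf ρ φ x x y = 0 := by
  simp [omegaOf, halt.self_eq_zero]

theorem omegaOf_cyclic (halt : φ.IsAlt)
    (hcoc : ∀ x y z : A,
      ρ x (φ y z) - ρ y (φ x z) + ρ z (φ x y)
        - φ ⁅x, y⁆ z + φ ⁅x, z⁆ y - φ ⁅y, z⁆ x = 0) (x y z : A) :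
    omegaOf ρ φ x y z + omegaOf ρ φ y z x + omegaOf ρ φ z x y = 0 := by
  have hzx : φ ⁅x, z⁆ y = -φ ⁅z, x⁆ y := by rw [← lie_skew, map_neg, LinearMap.neg_apply]
  have hxz : ρ y (φ x z) = -ρ y (φ z x) := by rw [← halt.neg, map_neg]
  simp only [omegaOf]
  linear_combination (norm := module) -hcoc x y z + hzx - hxz

theorem apply_lie_lie_add_rho_omegaOf (hρ : ∀ x y, ρ ⁅x, y⁆ = ρ x * ρ y - ρ y * ρ x)
    (halt : φ.IsAlt)
    (hcoc : ∀ x y z : A,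
      ρ x (φ y z) - ρ y (φ x z) + ρ z (φ x y)
        - φ ⁅x, y⁆ z + φ ⁅x, z⁆ y - φ ⁅y, z⁆ x = 0) (X y₁ y₂ y₃ : A) :
    φ X ⁅⁅y₁, y₂⁆, y₃⁆ + ρ X (omegaOf ρ φ y₁ y₂ y₃)
      = omegaOf ρ φ ⁅X, y₁⁆ y₂ y₃ + omegaOf ρ φ y₁ ⁅X, y₂⁆ y₃ + omegaOf ρ φ y₁ y₂ ⁅X, y₃⁆
        + thetaRho ρ y₂ y₃ (φ X y₁) - thetaRho ρ y₁ y₃ (φ X y₂)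
        + DRho ρ y₁ y₂ (φ X y₃) := by
  have h₁ := hcoc X ⁅y₁, y₂⁆ y₃
  have h₂ := congrArg (ρ y₃) (hcoc X y₁ y₂)
  rw [leibniz_lie] at h₁
  simp only [map_add, map_sub, map_zero, LinearMap.add_apply] at h₁ h₂
  have e₁ := halt.neg ⁅X, y₃⁆ ⁅y₁, y₂⁆
  have e₂ := halt.neg X ⁅⁅y₁, y₂⁆, y₃⁆
  have e₃ := congrArg (ρ y₃) (halt.neg y₁ ⁅X, y₂⁆)
  have e₄ := congrArg (ρ y₃) (halt.neg X ⁅y₁, y₂⁆)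
  simp only [map_neg] at e₃ e₄
  simp only [omegaOf, DRho, thetaRho, hρ, LinearMap.sub_apply, Module.End.mul_apply, map_sub]
    at h₁ h₂ ⊢
  linear_combination (norm := module) h₁ - h₂ + e₁ - e₂ - e₃ + e₄

end

/-- if `φ` is a Lie algebra `2`-cocycle, then
`ω(x,y,z) := φ([x,y],z) − ρ(z)φ(x,y)` is a `3`-cocycle of the associated Lie triple
system `(L, [[·,·],·]; θ_ρ)`. -/
theorem lie_two_cocycle_to_lts_three_cocycle
    (ρ : L →ₗ[F] Module.End F V)
    (hρ : ∀ x y, ρ ⁅x, y⁆ = ρ x * ρ y - ρ y * ρ x)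
    (φ : L →ₗ[F] L →ₗ[F] V)
    (halt : ∀ x : L, φ x x = 0)
    (hcoc : ∀ x y z : L,
      ρ x (φ y z) - ρ y (φ x z) + ρ z (φ x y)
        - φ ⁅x, y⁆ z + φ ⁅x, z⁆ y - φ ⁅y, z⁆ x = 0) :
    (∀ x y : L, omegaOf ρ φ x x y = 0) ∧
    (∀ x y z : L, omegaOf ρ φ x y z + omegaOf ρ φ y z x + omegaOf ρ φ z x y = 0) ∧
    (∀ x₁ x₂ y₁ y₂ y₃ : L,
      omegaOf ρ φ x₁ x₂ ⁅⁅y₁, y₂⁆, y₃⁆ + DRho ρ x₁ x₂ (omegaOf ρ φ y₁ y₂ y₃)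
        = omegaOf ρ φ ⁅⁅x₁, x₂⁆, y₁⁆ y₂ y₃ + omegaOf ρ φ y₁ ⁅⁅x₁, x₂⁆, y₂⁆ y₃
          + omegaOf ρ φ y₁ y₂ ⁅⁅x₁, x₂⁆, y₃⁆
          + thetaRho ρ y₂ y₃ (omegaOf ρ φ x₁ x₂ y₁)
          - thetaRho ρ y₁ y₃ (omegaOf ρ φ x₁ x₂ y₂)
          + DRho ρ y₁ y₂ (omegaOf ρ φ x₁ x₂ y₃)) := by
  refine ⟨omegaOf_self_left halt, omegaOf_cyclic halt hcoc, fun x₁ x₂ y₁ y₂ y₃ => ?_⟩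
  have hφ := apply_lie_lie_add_rho_omegaOf hρ halt hcoc ⁅x₁, x₂⁆ y₁ y₂ y₃
  have hw := congrArg (· (φ x₁ x₂)) (rho_lie_lie_eq hρ y₁ y₂ y₃)
  simp only [Module.End.mul_apply, LinearMap.add_apply, LinearMap.sub_apply] at hw
  simp only [omegaOf, DRho_eq_of_lie hρ x₁ x₂, map_sub] at hφ ⊢
  linear_combination (norm := module) hφ - hw
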